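/- arXiv:math/0609421 — 4 statements merged into one kernel-verified Lean document; each statement's English description precedes it below -/
import Mathlib

section
/- The map φ sending a ∈ PIP_X to the partition of (X∪{x}) ∪ (X∪{x})' consisting of all lines of a together with one extra block containing x, x' and all points of a, is a bijection from PIP_X onto the subsemigroup of IP_{X∪{x}} of partitions in which x and x' lie in the same block. -/
/-- A subset of `X ⊕ X` (modelling `X ∪ X'`) is a *line* if it meets both halves. -/
def IsLine {X : Type*} (A : Set (X ⊕ X)) : Prop :=
  (∃ x, Sum.inl x ∈ A) ∧ (∃ x, Sum.inr x ∈ A)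

/-- A subset of `X ⊕ X` is a *point* if it is a singleton. -/
def IsPoint {X : Type*} (A : Set (X ⊕ X)) : Prop :=
  ∃ z, A = {z}

/-- `PIP X`: equivalence relations on `X ∪ X'` all of whose classes are lines
or points (the partial dual inverse symmetric monoid, elements as partitions). -/
def PIP (X : Type*) : Type _ :=
  {r : Setoid (X ⊕ X) // ∀ x : X ⊕ X, IsLine {y | r.r x y} ∨ IsPoint {y | r.r x y}}

/-- `z` is a point of the relation `r`, i.e. its class is the singleton `{z}`. -/
def IsPointOf {X : Type*} (r : (X ⊕ X) → (X ⊕ X) → Prop) (z : X ⊕ X) : Prop :=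
  ∀ w, r z w → w = z

/-- Membership in the distinguished extra block of `φ a`: the extra element `x`
(modelled by `none`), its primed copy `x'`, and all points of `a`. -/
def InExtraBlock {X : Type*} (r : (X ⊕ X) → (X ⊕ X) → Prop) :
    (Option X ⊕ Option X) → Prop
  | Sum.inl none => True
  | Sum.inr none => True
  | Sum.inl (some z) => IsPointOf r (Sum.inl z)
  | Sum.inr (some z) => IsPointOf r (Sum.inr z)

/-- The relation of `φ a` on `(X ∪ {x}) ∪ (X ∪ {x})'`: two elements are related
iff they lie in a common line of `a`, or both lie in the extra block consisting
of `x`, `x'` and all points of `a`. -/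
def phiRel {X : Type*} (r : (X ⊕ X) → (X ⊕ X) → Prop) :
    (Option X ⊕ Option X) → (Option X ⊕ Option X) → Prop :=
  fun u v =>
    (∃ z w : X ⊕ X, u = Sum.map some some z ∧ v = Sum.map some some w ∧
        r z w ∧ ¬ IsPointOf r z) ∨
    (InExtraBlock r u ∧ InExtraBlock r v)

namespace PhiAux


variable {X : Type*}

lemma iota_inj {z w : X ⊕ X} (h : Sum.map some some z = Sum.map some some w) : z = w := by
  cases z <;> cases w <;> simp_all

lemma iota_ne_inl_none (w : X ⊕ X) : Sum.map some some w ≠ Sum.inl none := by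
  cases w <;> simp

lemma iota_ne_inr_none (w : X ⊕ X) : Sum.map some some w ≠ Sum.inr none := by
  cases w <;> simp

lemma inExtra_iota (r : (X ⊕ X) → (X ⊕ X) → Prop) (z : X ⊕ X) :
    InExtraBlock r (Sum.map some some z) ↔ IsPointOf r z := by
  cases z <;> exact Iff.rfl

lemma not_point_of_rel {r : (X ⊕ X) → (X ⊕ X) → Prop} (hr : Equivalence r)
    {z w : X ⊕ X} (hzw : r z w) (hz : ¬ IsPointOf r z) : ¬ IsPointOf r w := by
  intro hw
  exact hz (by
    have hwz : z = w := (hw z (hr.symm hzw)).symm ▸ rfl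
    · subst hwz; exact hw)

lemma not_point_line {r : Setoid (X ⊕ X)}
    (hcl : ∀ x : X ⊕ X, IsLine {y | r.r x y} ∨ IsPoint {y | r.r x y})
    {z : X ⊕ X} (hz : ¬ IsPointOf r.r z) : IsLine {y | r.r z y} := by
  rcases hcl z with h | h
  · exact h
  · exfalso
    rcases h with ⟨w, hw⟩
    apply hz
    intro v hv
    have hzz : z ∈ {y | r.r z y} := r.iseqv.refl z
    have hv' : v ∈ {y | r.r z y} := hv
    rw [hw] at hzz hv'
    simp at hzz hv'
    rw [hv', hzz]

/-- phiRel is an equivalence. -/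
lemma phi_equiv {r : (X ⊕ X) → (X ⊕ X) → Prop} (hr : Equivalence r) :
    Equivalence (phiRel r) := by
  constructor
  · intro u
    rcases u with (_ | a) | (_ | a)
    · exact Or.inr ⟨trivial, trivial⟩
    · by_cases hp : IsPointOf r (Sum.inl a)
      · exact Or.inr ⟨hp, hp⟩
      · exact Or.inl ⟨Sum.inl a, Sum.inl a, rfl, rfl, hr.refl _, hp⟩
    · exact Or.inr ⟨trivial, trivial⟩
    · by_cases hp : IsPointOf r (Sum.inr a)
      · exact Or.inr ⟨hp, hp⟩
      · exact Or.inl ⟨Sum.inr a, Sum.inr a, rfl, rfl, hr.refl _, hp⟩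
  · rintro u v (⟨z, w, hu, hv, hzw, hz⟩ | ⟨h1, h2⟩)
    · exact Or.inl ⟨w, z, hv, hu, hr.symm hzw, not_point_of_rel hr hzw hz⟩
    · exact Or.inr ⟨h2, h1⟩
  · rintro u v w (⟨z1, w1, hu, hv, h1, hp1⟩ | ⟨h1, h2⟩) (⟨z2, w2, hv', hw, h2', hp2⟩ | ⟨h1', h2'⟩)
    · have : w1 = z2 := iota_inj (hv ▸ hv')
      subst this
      exact Or.inl ⟨z1, w2, hu, hw, hr.trans h1 h2', hp1⟩
    · exfalso
      rw [hv, inExtra_iota] at h1'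
      exact not_point_of_rel hr h1 hp1 h1'
    · exfalso
      rw [hv', inExtra_iota] at h2
      exact hp2 h2
    · exact Or.inr ⟨h1, h2'⟩

lemma phi_lines {r : Setoid (X ⊕ X)}
    (hcl : ∀ x : X ⊕ X, IsLine {y | r.r x y} ∨ IsPoint {y | r.r x y}) :
    ∀ u, IsLine {v | phiRel r.r u v} := by
  intro u
  by_cases he : InExtraBlock r.r u
  · exact ⟨⟨none, Or.inr ⟨he, trivial⟩⟩, ⟨none, Or.inr ⟨he, trivial⟩⟩⟩
  · -- u must be of form Sum.map some some z with ¬ IsPointOf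
    obtain ⟨z, rfl, hz⟩ : ∃ z : X ⊕ X, u = Sum.map some some z ∧ ¬ IsPointOf r.r z := by
      rcases u with (_ | a) | (_ | a)
      · exact absurd trivial he
      · exact ⟨Sum.inl a, rfl, he⟩
      · exact absurd trivial he
      · exact ⟨Sum.inr a, rfl, he⟩
    obtain ⟨⟨u₀, hu₀⟩, ⟨v₀, hv₀⟩⟩ := not_point_line hcl hz
    exact ⟨⟨some u₀, Or.inl ⟨z, Sum.inl u₀, rfl, rfl, hu₀, hz⟩⟩,
           ⟨some v₀, Or.inl ⟨z, Sum.inr v₀, rfl, rfl, hv₀, hz⟩⟩⟩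

/-- point detection from phiRel -/
lemma phi_point_iff (r : (X ⊕ X) → (X ⊕ X) → Prop) (z : X ⊕ X) :
    phiRel r (Sum.map some some z) (Sum.inl none) ↔ IsPointOf r z := by
  constructor
  · rintro (⟨z1, w1, _, hw, _⟩ | ⟨h1, _⟩)
    · exact absurd hw.symm (iota_ne_inl_none w1)
    · exact (inExtra_iota r z).mp h1
  · intro h
    exact Or.inr ⟨(inExtra_iota r z).mpr h, trivial⟩

lemma phi_iota_iff (r : (X ⊕ X) → (X ⊕ X) → Prop) (z w : X ⊕ X) :
    phiRel r (Sum.map some some z) (Sum.map some some w) ↔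
      (r z w ∧ ¬ IsPointOf r z) ∨ (IsPointOf r z ∧ IsPointOf r w) := by
  constructor
  · rintro (⟨z1, w1, hz, hw, h, hp⟩ | ⟨h1, h2⟩)
    · obtain rfl := iota_inj hz
      obtain rfl := iota_inj hw
      exact Or.inl ⟨h, hp⟩
    · exact Or.inr ⟨(inExtra_iota r z).mp h1, (inExtra_iota r w).mp h2⟩
  · rintro (⟨h, hp⟩ | ⟨h1, h2⟩)
    · exact Or.inl ⟨z, w, rfl, rfl, h, hp⟩
    · exact Or.inr ⟨(inExtra_iota r z).mpr h1, (inExtra_iota r w).mpr h2⟩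




variable {X : Type*}

/-- inverse construction -/
def invRel (r : (Option X ⊕ Option X) → (Option X ⊕ Option X) → Prop)
    (z w : X ⊕ X) : Prop :=
  (r (Sum.map some some z) (Sum.map some some w) ∧
      ¬ r (Sum.map some some z) (Sum.inl none)) ∨
  (r (Sum.map some some z) (Sum.inl none) ∧ z = w)

section Inv

variable {r : (Option X ⊕ Option X) → (Option X ⊕ Option X) → Prop}
  (heq : Equivalence r) (hline : ∀ u, IsLine {v | r u v})
  (hx : r (Sum.inl none) (Sum.inr none))

include heq in
lemma inv_equiv : Equivalence (invRel r) := by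
  constructor
  · intro z
    by_cases h : r (Sum.map some some z) (Sum.inl none)
    · exact Or.inr ⟨h, rfl⟩
    · exact Or.inl ⟨heq.refl _, h⟩
  · rintro z w (⟨h1, h2⟩ | ⟨h1, rfl⟩)
    · exact Or.inl ⟨heq.symm h1, fun hc => h2 (heq.trans h1 hc)⟩
    · exact Or.inr ⟨h1, rfl⟩
  · rintro z w v (⟨h1, h2⟩ | ⟨h1, rfl⟩) (⟨h1', h2'⟩ | ⟨h1', rfl⟩)
    · exact Or.inl ⟨heq.trans h1 h1', h2⟩
    · exact absurd (heq.trans h1 h1') h2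
    · exact Or.inl ⟨h1', h2'⟩
    · exact Or.inr ⟨h1, rfl⟩

include heq hline hx in
lemma inv_point_iff (z : X ⊕ X) :
    IsPointOf (invRel r) z ↔ r (Sum.map some some z) (Sum.inl none) := by
  constructor
  · intro hp
    by_contra h
    obtain ⟨⟨u₀, hu₀⟩, ⟨v₀, hv₀⟩⟩ := hline (Sum.map some some z)
    -- u₀, v₀ must be `some`
    obtain ⟨a, rfl⟩ : ∃ a, u₀ = some a := by
      cases u₀ with
      | none => exact absurd hu₀ h
      | some a => exact ⟨a, rfl⟩
    obtain ⟨b, rfl⟩ : ∃ b, v₀ = some b := by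
      cases v₀ with
      | none => exact absurd (heq.trans hv₀ (heq.symm hx)) h
      | some b => exact ⟨b, rfl⟩
    cases z with
    | inl c =>
      have := hp (Sum.inr b) (Or.inl ⟨hv₀, h⟩)
      simp at this
    | inr c =>
      have := hp (Sum.inl a) (Or.inl ⟨hu₀, h⟩)
      simp at this
  · rintro h w (⟨_, h2⟩ | ⟨_, rfl⟩)
    · exact absurd h h2
    · rfl

include heq hline hx in
lemma inv_extra (u : Option X ⊕ Option X) :
    InExtraBlock (invRel r) u ↔ r (Sum.inl none) u := by
  rcases u with (_ | a) | (_ | a)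
  · simp [InExtraBlock, heq.refl]
  · constructor
    · intro h
      have : IsPointOf (invRel r) (Sum.inl a) := h
      rw [inv_point_iff heq hline hx] at this
      exact heq.symm this
    · intro h
      show IsPointOf (invRel r) (Sum.inl a)
      rw [inv_point_iff heq hline hx]
      exact heq.symm h
  · simp [InExtraBlock, hx]
  · constructor
    · intro h
      have : IsPointOf (invRel r) (Sum.inr a) := h
      rw [inv_point_iff heq hline hx] at this
      exact heq.symm this
    · intro h
      show IsPointOf (invRel r) (Sum.inr a)
      rw [inv_point_iff heq hline hx]
      exact heq.symm h

include heq hline hx in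
lemma inv_classes :
    ∀ z : X ⊕ X, IsLine {y | invRel r z y} ∨ IsPoint {y | invRel r z y} := by
  intro z
  by_cases h : r (Sum.map some some z) (Sum.inl none)
  · right
    refine ⟨z, Set.ext fun y => ?_⟩
    simp only [Set.mem_setOf_eq, Set.mem_singleton_iff]
    constructor
    · rintro (⟨_, h2⟩ | ⟨_, rfl⟩)
      · exact absurd h h2
      · rfl
    · rintro rfl
      exact Or.inr ⟨h, rfl⟩
  · left
    obtain ⟨⟨u₀, hu₀⟩, ⟨v₀, hv₀⟩⟩ := hline (Sum.map some some z)
    obtain ⟨a, rfl⟩ : ∃ a, u₀ = some a := by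
      cases u₀ with
      | none => exact absurd hu₀ h
      | some a => exact ⟨a, rfl⟩
    obtain ⟨b, rfl⟩ : ∃ b, v₀ = some b := by
      cases v₀ with
      | none => exact absurd (heq.trans hv₀ (heq.symm hx)) h
      | some b => exact ⟨b, rfl⟩
    exact ⟨⟨a, Or.inl ⟨hu₀, h⟩⟩, ⟨b, Or.inl ⟨hv₀, h⟩⟩⟩

include heq hline hx in
lemma phi_inv (u v : Option X ⊕ Option X) : phiRel (invRel r) u v ↔ r u v := by
  constructor
  · rintro (⟨z, w, rfl, rfl, hzw, hp⟩ | ⟨h1, h2⟩)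
    · rcases hzw with ⟨h1, _⟩ | ⟨h1, rfl⟩
      · exact h1
      · exact absurd ((inv_point_iff heq hline hx z).mpr h1) hp
    · rw [inv_extra heq hline hx] at h1 h2
      exact heq.trans (heq.symm h1) h2
  · intro huv
    by_cases h : r (Sum.inl none) u
    · exact Or.inr ⟨(inv_extra heq hline hx u).mpr h,
        (inv_extra heq hline hx v).mpr (heq.trans h huv)⟩
    · obtain ⟨z, rfl⟩ : ∃ z : X ⊕ X, u = Sum.map some some z := by
        rcases u with (_ | a) | (_ | a)
        · exact absurd (heq.refl _) h
        · exact ⟨Sum.inl a, rfl⟩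
        · exact absurd hx h
        · exact ⟨Sum.inr a, rfl⟩
      have hv : ¬ r (Sum.inl none) v := fun hc => h (heq.trans hc (heq.symm huv))
      obtain ⟨w, rfl⟩ : ∃ w : X ⊕ X, v = Sum.map some some w := by
        rcases v with (_ | a) | (_ | a)
        · exact absurd (heq.refl _) hv
        · exact ⟨Sum.inl a, rfl⟩
        · exact absurd hx hv
        · exact ⟨Sum.inr a, rfl⟩
      refine Or.inl ⟨z, w, rfl, rfl, Or.inl ⟨huv, fun hc => h (heq.symm hc)⟩, ?_⟩
      rw [inv_point_iff heq hline hx]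
      exact fun hc => h (heq.symm hc)

end Inv

end PhiAux

/-- `φ` is a bijection from `PIP_X` onto the set of elements of `IP_{X∪{x}}`
in which `x` and `x'` lie in the same block. -/
theorem phi_bijective (X : Type*) :
    Set.BijOn (fun a : PIP X => phiRel a.1.r) Set.univ
      {r : (Option X ⊕ Option X) → (Option X ⊕ Option X) → Prop |
        Equivalence r ∧ (∀ u, IsLine {v | r u v}) ∧
        r (Sum.inl none) (Sum.inr none)} := by
  classical
  open PhiAux in
  refine ⟨fun a _ => ⟨phi_equiv a.1.iseqv, phi_lines a.2, Or.inr ⟨trivial, trivial⟩⟩,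
    fun a _ b _ h => ?_, fun r hr => ?_⟩
  · have h' : phiRel a.1.r = phiRel b.1.r := h
    have hpoint : ∀ z, IsPointOf a.1.r z ↔ IsPointOf b.1.r z := fun z => by
      rw [← phi_point_iff a.1.r z, ← phi_point_iff b.1.r z, h']
    apply Subtype.ext
    apply Setoid.ext
    intro z w
    constructor
    · intro hzw
      by_cases hp : IsPointOf a.1.r z
      · have hwz : w = z := hp w hzw
        subst hwz
        exact b.1.iseqv.refl _
      · have h1 := (phi_iota_iff a.1.r z w).mpr (Or.inl ⟨hzw, hp⟩)
        rw [h'] at h1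
        rcases (phi_iota_iff b.1.r z w).mp h1 with ⟨h2, _⟩ | ⟨h2, _⟩
        · exact h2
        · exact absurd ((hpoint z).mpr h2) hp
    · intro hzw
      by_cases hp : IsPointOf b.1.r z
      · have hwz : w = z := hp w hzw
        subst hwz
        exact a.1.iseqv.refl _
      · have h1 := (phi_iota_iff b.1.r z w).mpr (Or.inl ⟨hzw, hp⟩)
        rw [← h'] at h1
        rcases (phi_iota_iff a.1.r z w).mp h1 with ⟨h2, _⟩ | ⟨h2, _⟩
        · exact h2
        · exact absurd ((hpoint z).mp h2) hp
  · obtain ⟨heq, hline, hx⟩ := hr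
    refine ⟨⟨⟨invRel r, inv_equiv heq⟩, inv_classes heq hline hx⟩, Set.mem_univ _, ?_⟩
    funext u v
    exact propext (phi_inv heq hline hx u v)
end

section
/- With multiplication a·b = φ^{-1}(φ(a)·φ(b)), PIP_X is a monoid containing IP_X as a submonoid. -/
/-- `IP X`: equivalence relations on `X ∪ X'` all of whose classes are lines,
i.e. the dual inverse symmetric monoid on `X` (elements viewed as partitions). -/
def IP (X : Type*) : Type _ :=
  {r : Setoid (X ⊕ X) // ∀ x : X ⊕ X, IsLine {y | r.r x y}}

/-- Alternating chain condition through relations `r` (playing the role of `≡_a`)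
and `s` (playing the role of `≡_b`): the list `c₁, c₂, …` of elements of `X`
satisfies `c₁ ≡_b c₂`, `c₂' ≡_a c₃'`, `c₃ ≡_b c₄`, … (when the flag is `true`;
flag `false` starts with an `a`-link on the primed side). -/
def AltChain {X : Type*} (r s : (X ⊕ X) → (X ⊕ X) → Prop) :
    Bool → List X → Prop
  | _, [] => True
  | _, [_] => True
  | true, x :: y :: l => s (Sum.inl x) (Sum.inl y) ∧ AltChain r s false (y :: l)
  | false, x :: y :: l => r (Sum.inr x) (Sum.inr y) ∧ AltChain r s true (y :: l)

/-- The product relation `≡` of `a` and `b` on `X ∪ X'`, defined by the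
alternating-chain conditions of the paper. -/
def prodRel {X : Type*} (r s : (X ⊕ X) → (X ⊕ X) → Prop) :
    (X ⊕ X) → (X ⊕ X) → Prop
  | Sum.inl x, Sum.inl y =>
      r (Sum.inl x) (Sum.inl y) ∨
      ∃ (c : X) (l : List X), (c :: l).length % 2 = 0 ∧
        r (Sum.inl x) (Sum.inr c) ∧ AltChain r s true (c :: l) ∧
        r (Sum.inr ((c :: l).getLast (List.cons_ne_nil c l))) (Sum.inl y)
  | Sum.inr x, Sum.inr y =>
      s (Sum.inr x) (Sum.inr y) ∨
      ∃ (c : X) (l : List X), (c :: l).length % 2 = 0 ∧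
        s (Sum.inr x) (Sum.inl c) ∧ AltChain r s false (c :: l) ∧
        s (Sum.inl ((c :: l).getLast (List.cons_ne_nil c l))) (Sum.inr y)
  | Sum.inl x, Sum.inr y =>
      ∃ (c : X) (l : List X), (c :: l).length % 2 = 1 ∧
        r (Sum.inl x) (Sum.inr c) ∧ AltChain r s true (c :: l) ∧
        s (Sum.inl ((c :: l).getLast (List.cons_ne_nil c l))) (Sum.inr y)
  | Sum.inr x, Sum.inl y =>
      ∃ (c : X) (l : List X), (c :: l).length % 2 = 1 ∧
        r (Sum.inl y) (Sum.inr c) ∧ AltChain r s true (c :: l) ∧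
        s (Sum.inl ((c :: l).getLast (List.cons_ne_nil c l))) (Sum.inr x)

/-!
Diagrams are relations on `X ⊕ X`, with `inl` the top row `X` and `inr` the bottom row `X'`.
Drawing `r` on levels `0, 1` and `s` on levels `1, 2` of `ℕ × X`, the alternating-chain product
of `r` and `s` is connectivity between points of the outer levels. Both bracketings of a triple
product therefore compute connectivity in the four-level picture of `r, s, t`, since a path's
excursions into a hidden level can be shortcut by the connectivity of the two diagrams adjacent
to it. So `IP_Y` is a monoid, with the identity diagram `{y, y'}` as unit. The map `φ` is a
bijection from `PIP_X` onto the submonoid of `IP_{X ∪ {none}}` where `none ~ none'`, which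
transports the monoid structure. Finally `a` has no points iff the block of `none` in `φ a` is
`{none, none'}`, and products preserve this because the fibre over `none` is closed in the
stacked picture; hence `IP_X` is a submonoid.
-/

open Relation Sum

theorem Relation.reflTransGen_sup_iff_of_supported {α : Type*} {R₁ R₂ : α → α → Prop}
    {B : Set α} (h₂ : ∀ x y, R₂ x y → x ∈ B ∧ y ∈ B) {a b : α} (ha : a ∈ B)
    (hb : b ∈ B) :
    ReflTransGen (R₁ ⊔ R₂) a b ↔
      ReflTransGen (fun x y => x ∈ B ∧ y ∈ B ∧ ReflTransGen R₁ x y ∨ R₂ x y) a b := by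
  set Q := fun x y => x ∈ B ∧ y ∈ B ∧ ReflTransGen R₁ x y ∨ R₂ x y
  constructor
  · intro h
    -- `m` is the last point of `B` visited so far
    have key : ∀ w, ReflTransGen (R₁ ⊔ R₂) a w →
        ∃ m ∈ B, ReflTransGen Q a m ∧ ReflTransGen R₁ m w := by
      intro w hw
      induction hw with
      | refl => exact ⟨a, ha, .refl, .refl⟩
      | tail _ step ih =>
        obtain ⟨m, hm, hQ, h₁⟩ := ih
        rcases step with step | step
        · exact ⟨m, hm, hQ, h₁.tail step⟩
        · obtain ⟨hc, hd⟩ := h₂ _ _ step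
          exact ⟨_, hd, (hQ.tail (Or.inl ⟨hm, hc, h₁⟩)).tail (Or.inr step), .refl⟩
    obtain ⟨m, hm, hQ, h₁⟩ := key b h
    exact hQ.tail (Or.inl ⟨hm, hb, h₁⟩)
  · refine fun h => reflTransGen_closed (fun x y hxy => ?_) _ _ h
    rcases hxy with ⟨-, -, h⟩ | h
    · exact ReflTransGen.mono (fun _ _ => Or.inl) _ _ h
    · exact .single (Or.inr h)

section Diagram

variable {X : Type*}

def unprime : X ⊕ X → X := Sum.elim id id

@[simp] theorem unprime_inl (x : X) : unprime (inl x : X ⊕ X) = x := rfl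

@[simp] theorem unprime_inr (x : X) : unprime (inr x : X ⊕ X) = x := rfl

-- In a product of `r` and `s`, the bottom row of `r` and the top row of `s` form the middle row.

def outerRel (r s : X ⊕ X → X ⊕ X → Prop) : X ⊕ X → X ⊕ X → Prop
  | inl x, inl y => r (inl x) (inl y)
  | inr x, inr y => s (inr x) (inr y)
  | _, _ => False

def toMid (r s : X ⊕ X → X ⊕ X → Prop) : X ⊕ X → X → Prop
  | inl x, c => r (inl x) (inr c)
  | inr x, c => s (inr x) (inl c)

def midLink (r s : X ⊕ X → X ⊕ X → Prop) (c d : X) : Prop :=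
  r (inr c) (inr d) ∨ s (inl c) (inl d)

def midConn (r s : X ⊕ X → X ⊕ X → Prop) : X → X → Prop :=
  ReflTransGen (midLink r s)

def compRel (r s : X ⊕ X → X ⊕ X → Prop) (u v : X ⊕ X) : Prop :=
  outerRel r s u v ∨ ∃ c d, toMid r s u c ∧ midConn r s c d ∧ toMid r s v d

variable {r s : X ⊕ X → X ⊕ X → Prop} (hr : Equivalence r) (hs : Equivalence s)
include hr hs

theorem outerRel_trans :
    ∀ {u v w : X ⊕ X}, outerRel r s u v → outerRel r s v w → outerRel r s u w
  | inl _, inl _, inl _, h, h' => hr.trans h h'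
  | inr _, inr _, inr _, h, h' => hs.trans h h'

theorem outerRel_symm : ∀ {u v : X ⊕ X}, outerRel r s u v → outerRel r s v u
  | inl _, inl _, h => hr.symm h
  | inr _, inr _, h => hs.symm h

theorem toMid_of_outerRel :
    ∀ {u v : X ⊕ X} {c : X}, outerRel r s u v → toMid r s v c → toMid r s u c
  | inl _, inl _, _, h, h' => hr.trans h h'
  | inr _, inr _, _, h, h' => hs.trans h h'

theorem midLink_of_toMid :
    ∀ {u : X ⊕ X} {c d : X}, toMid r s u c → toMid r s u d → midLink r s c d
  | inl _, _, _, h, h' => Or.inl (hr.trans (hr.symm h) h')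
  | inr _, _, _, h, h' => Or.inr (hs.trans (hs.symm h) h')

theorem midLink_symm {c d : X} : midLink r s c d → midLink r s d c :=
  Or.imp hr.symm hs.symm

theorem midConn_symm {c d : X} (h : midConn r s c d) : midConn r s d c :=
  haveI : Std.Symm (midLink r s) := ⟨fun _ _ => midLink_symm hr hs⟩
  Std.Symm.symm (r := ReflTransGen (midLink r s)) _ _ h

theorem compRel_refl : ∀ u : X ⊕ X, compRel r s u u
  | inl _ => Or.inl (hr.refl _)
  | inr _ => Or.inl (hs.refl _)

theorem compRel_of_compRel_of_outerRel {u v w : X ⊕ X} (h : compRel r s u v)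
    (h' : outerRel r s v w) : compRel r s u w := by
  rcases h with h | ⟨c, d, hc, hcd, hd⟩
  · exact Or.inl (outerRel_trans hr hs h h')
  · exact Or.inr ⟨c, d, hc, hcd, toMid_of_outerRel hr hs (outerRel_symm hr hs h') hd⟩

theorem exists_midConn_of_compRel_of_toMid {u v : X ⊕ X} {c : X} (h : compRel r s u v)
    (hc : toMid r s v c) : ∃ c₀, toMid r s u c₀ ∧ midConn r s c₀ c := by
  rcases h with h | ⟨c₀, d, hc₀, hcd, hd⟩
  · exact ⟨c, toMid_of_outerRel hr hs h hc, .refl⟩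
  · exact ⟨c₀, hc₀, hcd.tail (midLink_of_toMid hr hs hd hc)⟩

end Diagram

section Levels

variable {X L : Type*} {i j k : L} {a b : L × X}

def atLevels (i j : L) : X ⊕ X → L × X := Sum.elim (Prod.mk i) (Prod.mk j)

/-- Stacking `placed i j r` over `placed j k s` puts the middle row of the product of `r` and `s`
on level `j`. -/
def placed (i j : L) (r : X ⊕ X → X ⊕ X → Prop) : L × X → L × X → Prop :=
  Relation.Map r (atLevels i j) (atLevels i j)

theorem atLevels_snd (u : X ⊕ X) : (atLevels i j u).2 = unprime u := by
  cases u <;> rfl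

theorem atLevels_fst (u : X ⊕ X) : (atLevels i j u).1 = i ∨ (atLevels i j u).1 = j := by
  cases u
  exacts [Or.inl rfl, Or.inr rfl]

theorem exists_atLevels_eq (h : a.1 = i ∨ a.1 = j) : ∃ u, atLevels i j u = a := by
  obtain ⟨l, x⟩ := a
  rcases h with rfl | rfl
  exacts [⟨inl x, rfl⟩, ⟨inr x, rfl⟩]

theorem atLevels_injective (hij : i ≠ j) : Function.Injective (atLevels (X := X) i j) := by
  rintro (x | x) (y | y) h <;> simp_all [atLevels, eq_comm]

theorem atLevels_fst_ne (hij : i ≠ j) (hkj : k ≠ j) (u : X ⊕ X) :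
    (atLevels i k u).1 ≠ j := by
  rcases atLevels_fst (i := i) (j := k) u with h | h <;> rw [h] <;> assumption

theorem atLevels_ne_mk (hij : i ≠ j) (hkj : k ≠ j) (u : X ⊕ X) (c : X) :
    atLevels i k u ≠ (j, c) :=
  fun h => atLevels_fst_ne hij hkj u (congrArg Prod.fst h)

theorem placed_fst {r : X ⊕ X → X ⊕ X → Prop} (h : placed i j r a b) :
    (a.1 = i ∨ a.1 = j) ∧ (b.1 = i ∨ b.1 = j) := by
  obtain ⟨u, v, -, rfl, rfl⟩ := h
  exact ⟨atLevels_fst u, atLevels_fst v⟩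

variable {r s : X ⊕ X → X ⊕ X → Prop}

theorem placed_sup_placed_cases (hr : Equivalence r) (hs : Equivalence s)
    (h : (placed i j r ⊔ placed j k s) a b) :
    (∃ u v, a = atLevels i k u ∧ b = atLevels i k v ∧ outerRel r s u v) ∨
    (∃ u c, a = atLevels i k u ∧ b = (j, c) ∧ toMid r s u c) ∨
    (∃ c u, a = (j, c) ∧ b = atLevels i k u ∧ toMid r s u c) ∨
    (∃ c d, a = (j, c) ∧ b = (j, d) ∧ midLink r s c d) := by
  rcases h with ⟨x | x, y | y, h, rfl, rfl⟩ | ⟨x | x, y | y, h, rfl, rfl⟩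
  · exact Or.inl ⟨inl x, inl y, rfl, rfl, h⟩
  · exact Or.inr (Or.inl ⟨inl x, y, rfl, rfl, h⟩)
  · exact Or.inr (Or.inr (Or.inl ⟨x, inl y, rfl, rfl, hr.symm h⟩))
  · exact Or.inr (Or.inr (Or.inr ⟨x, y, rfl, rfl, Or.inl h⟩))
  · exact Or.inr (Or.inr (Or.inr ⟨x, y, rfl, rfl, Or.inr h⟩))
  · exact Or.inr (Or.inr (Or.inl ⟨x, inr y, rfl, rfl, hs.symm h⟩))
  · exact Or.inr (Or.inl ⟨inr x, y, rfl, rfl, h⟩)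
  · exact Or.inl ⟨inr x, inr y, rfl, rfl, h⟩

theorem placed_sup_placed_of_outerRel :
    ∀ {u v : X ⊕ X}, outerRel r s u v →
      (placed i j r ⊔ placed j k s) (atLevels i k u) (atLevels i k v)
  | inl x, inl y, h => Or.inl ⟨inl x, inl y, h, rfl, rfl⟩
  | inr x, inr y, h => Or.inr ⟨inr x, inr y, h, rfl, rfl⟩

theorem placed_sup_placed_of_toMid :
    ∀ {u : X ⊕ X} {c : X}, toMid r s u c →
      (placed i j r ⊔ placed j k s) (atLevels i k u) (j, c)
  | inl x, c, h => Or.inl ⟨inl x, inr c, h, rfl, rfl⟩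
  | inr x, c, h => Or.inr ⟨inr x, inl c, h, rfl, rfl⟩

theorem placed_sup_placed_of_midLink {c d : X} :
    midLink r s c d → (placed i j r ⊔ placed j k s) (j, c) (j, d)
  | Or.inl h => Or.inl ⟨inr c, inr d, h, rfl, rfl⟩
  | Or.inr h => Or.inr ⟨inl c, inl d, h, rfl, rfl⟩

theorem placed_sup_placed_symm (hr : Equivalence r) (hs : Equivalence s) :
    (placed i j r ⊔ placed j k s) a b → (placed i j r ⊔ placed j k s) b a
  | Or.inl ⟨u, v, h, hu, hv⟩ => Or.inl ⟨v, u, hr.symm h, hv, hu⟩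
  | Or.inr ⟨u, v, h, hu, hv⟩ => Or.inr ⟨v, u, hs.symm h, hv, hu⟩

end Levels

section Graph

variable {X L : Type*} {i j k : L} {r s : X ⊕ X → X ⊕ X → Prop}
  (hr : Equivalence r) (hs : Equivalence s)
include hr hs

theorem compRel_or_midConn_of_reflTransGen (hij : i ≠ j) (hkj : k ≠ j) (hik : i ≠ k)
    {u : X ⊕ X} {w : L × X}
    (hw : ReflTransGen (placed i j r ⊔ placed j k s) (atLevels i k u) w) :
    (∃ z, w = atLevels i k z ∧ compRel r s u z) ∨
      (∃ c c₀, w = (j, c) ∧ toMid r s u c₀ ∧ midConn r s c₀ c) := by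
  have inj := atLevels_injective (X := X) hik
  induction hw with
  | refl => exact Or.inl ⟨u, rfl, compRel_refl hr hs u⟩
  | tail _ step ih =>
    rcases placed_sup_placed_cases hr hs step with
        ⟨z, z', rfl, rfl, h⟩ | ⟨z, c, rfl, rfl, h⟩ | ⟨c, z, rfl, rfl, h⟩ | ⟨c, d, rfl, rfl, h⟩ <;>
      rcases ih with ⟨y, hy, hu⟩ | ⟨c', c₀, hc', hc₀, hcc⟩
    · obtain rfl := inj hy
      exact Or.inl ⟨z', rfl, compRel_of_compRel_of_outerRel hr hs hu h⟩
    · exact absurd hc' (atLevels_ne_mk hij hkj z c')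
    · obtain rfl := inj hy
      obtain ⟨c₀, hc₀, hcc⟩ := exists_midConn_of_compRel_of_toMid hr hs hu h
      exact Or.inr ⟨c, c₀, rfl, hc₀, hcc⟩
    · exact absurd hc' (atLevels_ne_mk hij hkj z c')
    · exact absurd hy.symm (atLevels_ne_mk hij hkj y c)
    · obtain rfl := (Prod.mk.inj hc').2
      exact Or.inl ⟨z, rfl, Or.inr ⟨c₀, c, hc₀, hcc, h⟩⟩
    · exact absurd hy.symm (atLevels_ne_mk hij hkj y c)
    · obtain rfl := (Prod.mk.inj hc').2
      exact Or.inr ⟨d, c₀, rfl, hc₀, hcc.tail h⟩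

theorem compRel_iff_reflTransGen (hij : i ≠ j) (hkj : k ≠ j) (hik : i ≠ k) (u v : X ⊕ X) :
    compRel r s u v ↔
      ReflTransGen (placed i j r ⊔ placed j k s) (atLevels i k u) (atLevels i k v) := by
  constructor
  · rintro (h | ⟨c, d, hc, hcd, hd⟩)
    · exact .single (placed_sup_placed_of_outerRel h)
    · have hmid : ReflTransGen (placed i j r ⊔ placed j k s) (j, c) (j, d) :=
        ReflTransGen.lift (Prod.mk j) (fun _ _ => placed_sup_placed_of_midLink) _ _ hcd
      exact ((ReflTransGen.single (placed_sup_placed_of_toMid hc)).trans hmid).tail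
        (placed_sup_placed_symm hr hs (placed_sup_placed_of_toMid hd))
  · intro h
    rcases compRel_or_midConn_of_reflTransGen hr hs hij hkj hik h with
      ⟨z, hz, hu⟩ | ⟨c, -, hc, -, -⟩
    · exact atLevels_injective hik hz ▸ hu
    · exact absurd hc (atLevels_ne_mk hij hkj v c)

theorem compRel_equivalence : Equivalence (compRel r s) := by
  have h := compRel_iff_reflTransGen (i := 0) (j := 1) (k := 2) hr hs
    (by decide) (by decide) (by decide)
  have : Std.Symm (placed 0 1 r ⊔ placed 1 2 s) := ⟨fun _ _ => placed_sup_placed_symm hr hs⟩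
  refine ⟨compRel_refl hr hs, fun huv => ?_, fun huv hvw => ?_⟩
  · exact (h _ _).2 (Std.Symm.symm _ _ ((h _ _).1 huv))
  · exact (h _ _).2 (((h _ _).1 huv).trans ((h _ _).1 hvw))

theorem unprime_eq_of_compRel {p : X}
    (hrp : ∀ ⦃u v⦄, r u v → unprime u = p → unprime v = p)
    (hsp : ∀ ⦃u v⦄, s u v → unprime u = p → unprime v = p) {u v : X ⊕ X}
    (h : compRel r s u v) (hu : unprime u = p) : unprime v = p := by
  have path := (compRel_iff_reflTransGen (i := 0) (j := 1) (k := 2) hr hs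
    (by decide) (by decide) (by decide) u v).1 h
  rw [← atLevels_snd (i := 0) (j := 2)] at hu ⊢
  generalize atLevels 0 2 v = w at path ⊢
  induction path with
  | refl => exact hu
  | tail _ step ih =>
    obtain ⟨a, b, hab, rfl, rfl⟩ | ⟨a, b, hab, rfl, rfl⟩ := step <;>
      rw [atLevels_snd] at ih ⊢
    exacts [hrp hab ih, hsp hab ih]

/-- Only `r` and `s` touch level `j`, so between points off level `j` their two placed copies
may be replaced by the placed product. -/
theorem reflTransGen_placed_compRel_sup (hij : i ≠ j) (hkj : k ≠ j) (hik : i ≠ k)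
    {T : L × X → L × X → Prop} (hT : ∀ a b, T a b → a.1 ≠ j ∧ b.1 ≠ j)
    {a b : L × X} (ha : a.1 ≠ j) (hb : b.1 ≠ j) :
    ReflTransGen (placed i k (compRel r s) ⊔ T) a b ↔
      ReflTransGen (placed i j r ⊔ placed j k s ⊔ T) a b := by
  rw [reflTransGen_sup_iff_of_supported (R₁ := placed i j r ⊔ placed j k s)
    (B := {a | a.1 ≠ j}) hT ha hb]
  have outer : ∀ {x y}, (placed i j r ⊔ placed j k s) x y → x.1 ≠ j →
      ∃ z, atLevels i k z = x := by
    rintro x y (h | h) hx <;> refine exists_atLevels_eq ?_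
    · exact Or.inl ((placed_fst h).1.resolve_right hx)
    · exact Or.inr ((placed_fst h).1.resolve_left hx)
  constructor
  · refine fun h => reflTransGen_closed (fun x y hxy => .single ?_) _ _ h
    rcases hxy with ⟨z, z', hzz', rfl, rfl⟩ | hxy
    · exact Or.inl ⟨atLevels_fst_ne hij hkj z, atLevels_fst_ne hij hkj z',
        (compRel_iff_reflTransGen hr hs hij hkj hik z z').1 hzz'⟩
    · exact Or.inr hxy
  · refine fun h => reflTransGen_closed (fun x y hxy => ?_) _ _ h
    rcases hxy with ⟨hx, hy, hxy⟩ | hxy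
    · rcases hxy.cases_head with rfl | ⟨x', hxx', -⟩
      · exact .refl
      rcases hxy.cases_tail with rfl | ⟨y', -, hy'y⟩
      · exact .refl
      obtain ⟨z, rfl⟩ := outer hxx' hx
      obtain ⟨z', rfl⟩ := outer (placed_sup_placed_symm hr hs hy'y) hy
      exact .single
        (Or.inl ⟨z, z', (compRel_iff_reflTransGen hr hs hij hkj hik z z').2 hxy, rfl, rfl⟩)
    · exact .single (Or.inr hxy)

end Graph

theorem compRel_assoc {X : Type*} {r s t : X ⊕ X → X ⊕ X → Prop} (hr : Equivalence r)
    (hs : Equivalence s) (ht : Equivalence t) :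
    compRel (compRel r s) t = compRel r (compRel s t) := by
  ext u v
  have hend (w : X ⊕ X) : (atLevels 0 3 w).1 ≠ 1 ∧ (atLevels 0 3 w).1 ≠ 2 := by
    have := atLevels_fst (i := 0) (j := 3) w; omega
  let path (R : ℕ × X → ℕ × X → Prop) := ReflTransGen R (atLevels 0 3 u) (atLevels 0 3 v)
  calc compRel (compRel r s) t u v
      ↔ path (placed 0 2 (compRel r s) ⊔ placed 2 3 t) :=
        compRel_iff_reflTransGen (compRel_equivalence hr hs) ht
          (by decide) (by decide) (by decide) u v
    _ ↔ path (placed 0 1 r ⊔ placed 1 2 s ⊔ placed 2 3 t) :=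
        reflTransGen_placed_compRel_sup hr hs (by decide) (by decide) (by decide)
          (fun _ _ h => by have := placed_fst h; omega) (hend u).1 (hend v).1
    _ ↔ path (placed 1 2 s ⊔ placed 2 3 t ⊔ placed 0 1 r) := by
        rw [sup_assoc, sup_comm (placed 0 1 r)]
    _ ↔ path (placed 1 3 (compRel s t) ⊔ placed 0 1 r) :=
        (reflTransGen_placed_compRel_sup hs ht (by decide) (by decide) (by decide)
          (fun _ _ h => by have := placed_fst h; omega) (hend u).2 (hend v).2).symm
    _ ↔ compRel r (compRel s t) u v := by
        rw [sup_comm]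
        exact (compRel_iff_reflTransGen hr (compRel_equivalence hs ht)
          (by decide) (by decide) (by decide) u v).symm

theorem compRel_isLine {X : Type*} {r s : X ⊕ X → X ⊕ X → Prop} (hr : Equivalence r)
    (hs : Equivalence s) (hlr : ∀ u, IsLine {v | r u v})
    (hls : ∀ u, IsLine {v | s u v}) : ∀ u, IsLine {v | compRel r s u v}
  | inl x => by
    obtain ⟨c, hc⟩ := (hlr (inl x)).2
    obtain ⟨y, hy⟩ := (hls (inl c)).2
    exact ⟨⟨x, compRel_refl hr hs _⟩, ⟨y, Or.inr ⟨c, c, hc, .refl, hs.symm hy⟩⟩⟩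
  | inr x => by
    obtain ⟨c, hc⟩ := (hls (inr x)).1
    obtain ⟨y, hy⟩ := (hlr (inr c)).1
    exact ⟨⟨y, Or.inr ⟨c, c, hc, .refl, hr.symm hy⟩⟩, ⟨x, compRel_refl hr hs _⟩⟩

section Unit

variable {X : Type*} {s : X ⊕ X → X ⊕ X → Prop} (hs : Equivalence s)
include hs

theorem midConn_unprime_left {c d : X} :
    midConn (fun u v => unprime u = unprime v) s c d ↔ s (inl c) (inl d) := by
  refine ⟨fun h => ?_, fun h => .single (Or.inr h)⟩
  induction h with
  | refl => exact hs.refl _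
  | tail _ h ih =>
    rcases h with h | h
    · simp only [unprime_inr] at h
      exact h ▸ ih
    · exact hs.trans ih h

theorem midConn_unprime_right {c d : X} :
    midConn s (fun u v => unprime u = unprime v) c d ↔ s (inr c) (inr d) := by
  refine ⟨fun h => ?_, fun h => .single (Or.inl h)⟩
  induction h with
  | refl => exact hs.refl _
  | tail _ h ih =>
    rcases h with h | h
    · exact hs.trans ih h
    · simp only [unprime_inl] at h
      exact h ▸ ih

theorem compRel_unprime_left : compRel (fun u v => unprime u = unprime v) s = s := by
  ext (x | x) (y | y) <;>
    simp only [compRel, outerRel, toMid, midConn_unprime_left hs, unprime_inl, unprime_inr]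
  · refine ⟨?_, fun h => Or.inr ⟨x, y, rfl, h, rfl⟩⟩
    rintro (rfl | ⟨c, d, rfl, h, rfl⟩)
    exacts [hs.refl _, h]
  · refine ⟨?_, fun h => Or.inr ⟨x, x, rfl, hs.refl _, hs.symm h⟩⟩
    rintro (h | ⟨c, d, rfl, h, h'⟩)
    exacts [h.elim, hs.trans h (hs.symm h')]
  · refine ⟨?_, fun h => Or.inr ⟨y, y, h, hs.refl _, rfl⟩⟩
    rintro (h | ⟨c, d, h, h', rfl⟩)
    exacts [h.elim, hs.trans h h']
  · refine ⟨?_, Or.inl⟩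
    rintro (h | ⟨c, d, h, h', h''⟩)
    exacts [h, hs.trans (hs.trans h h') (hs.symm h'')]

theorem compRel_unprime_right : compRel s (fun u v => unprime u = unprime v) = s := by
  ext (x | x) (y | y) <;>
    simp only [compRel, outerRel, toMid, midConn_unprime_right hs, unprime_inl, unprime_inr]
  · refine ⟨?_, Or.inl⟩
    rintro (h | ⟨c, d, h, h', h''⟩)
    exacts [h, hs.trans (hs.trans h h') (hs.symm h'')]
  · refine ⟨?_, fun h => Or.inr ⟨y, y, h, hs.refl _, rfl⟩⟩
    rintro (h | ⟨c, d, h, h', rfl⟩)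
    exacts [h.elim, hs.trans h h']
  · refine ⟨?_, fun h => Or.inr ⟨x, x, rfl, hs.refl _, hs.symm h⟩⟩
    rintro (h | ⟨c, d, rfl, h, h'⟩)
    exacts [h.elim, hs.trans h (hs.symm h')]
  · refine ⟨?_, fun h => Or.inr ⟨x, y, rfl, h, rfl⟩⟩
    rintro (rfl | ⟨c, d, rfl, h, rfl⟩)
    exacts [hs.refl _, h]

end Unit

section Chains

variable {X : Type*} {r s : X ⊕ X → X ⊕ X → Prop}

theorem midConn_of_altChain : ∀ {f : Bool} {c : X} (l : List X), AltChain r s f (c :: l) →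
    midConn r s c ((c :: l).getLast (List.cons_ne_nil c l))
  | _, _, [], _ => .refl
  | false, _, _ :: l, ⟨h, hl⟩ => .head (Or.inl h) (midConn_of_altChain l hl)
  | true, _, _ :: l, ⟨h, hl⟩ => .head (Or.inr h) (midConn_of_altChain l hl)

theorem exists_altChain_of_midConn (hr : Equivalence r) (hs : Equivalence s) {c d : X}
    (h : midConn r s c d) (f : Bool) (p : ℕ) :
    ∃ l, AltChain r s f (c :: l) ∧ (c :: l).getLast (List.cons_ne_nil c l) = d ∧
      (c :: l).length % 2 = p % 2 := by
  induction h using ReflTransGen.head_induction_on generalizing f p with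
  | refl =>
    rcases Nat.mod_two_eq_zero_or_one p with hp | hp
    · refine ⟨[d], ?_, rfl, by simp [hp]⟩
      cases f
      exacts [⟨hr.refl _, trivial⟩, ⟨hs.refl _, trivial⟩]
    · exact ⟨[], trivial, rfl, by simp [hp]⟩
  | @head c m hcm _ ih =>
    -- a link of the wrong kind for `f` is preceded by a trivial link of the right kind
    cases f <;> rcases hcm with h | h
    · obtain ⟨l, hl, hlast, hlen⟩ := ih true (p + 1)
      exact ⟨m :: l, ⟨h, hl⟩, hlast, by simp only [List.length_cons] at hlen ⊢; omega⟩
    · obtain ⟨l, hl, hlast, hlen⟩ := ih false p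
      exact ⟨c :: m :: l, ⟨hr.refl _, h, hl⟩, hlast,
        by simp only [List.length_cons] at hlen ⊢; omega⟩
    · obtain ⟨l, hl, hlast, hlen⟩ := ih true p
      exact ⟨c :: m :: l, ⟨hs.refl _, h, hl⟩, hlast,
        by simp only [List.length_cons] at hlen ⊢; omega⟩
    · obtain ⟨l, hl, hlast, hlen⟩ := ih false (p + 1)
      exact ⟨m :: l, ⟨h, hl⟩, hlast, by simp only [List.length_cons] at hlen ⊢; omega⟩

theorem prodRel_eq_compRel (hr : Equivalence r) (hs : Equivalence s) :
    prodRel r s = compRel r s := by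
  ext (x | x) (y | y) <;> simp only [prodRel, compRel, outerRel, toMid, false_or] <;> constructor
  · rintro (h | ⟨c, l, -, h₁, hl, h₂⟩)
    exacts [Or.inl h, Or.inr ⟨c, _, h₁, midConn_of_altChain l hl, hr.symm h₂⟩]
  · rintro (h | ⟨c, d, h₁, hcd, h₂⟩)
    · exact Or.inl h
    obtain ⟨l, hl, rfl, hlen⟩ := exists_altChain_of_midConn hr hs hcd true 0
    exact Or.inr ⟨c, l, hlen, h₁, hl, hr.symm h₂⟩
  · rintro ⟨c, l, -, h₁, hl, h₂⟩
    exact ⟨c, _, h₁, midConn_of_altChain l hl, hs.symm h₂⟩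
  · rintro ⟨c, d, h₁, hcd, h₂⟩
    obtain ⟨l, hl, rfl, hlen⟩ := exists_altChain_of_midConn hr hs hcd true 1
    exact ⟨c, l, hlen, h₁, hl, hs.symm h₂⟩
  · rintro ⟨c, l, -, h₁, hl, h₂⟩
    exact ⟨_, c, hs.symm h₂, midConn_symm hr hs (midConn_of_altChain l hl), h₁⟩
  · rintro ⟨c, d, h₁, hcd, h₂⟩
    obtain ⟨l, hl, rfl, hlen⟩ :=
      exists_altChain_of_midConn hr hs (midConn_symm hr hs hcd) true 1
    exact ⟨d, l, hlen, h₂, hl, hs.symm h₁⟩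
  · rintro (h | ⟨c, l, -, h₁, hl, h₂⟩)
    exacts [Or.inl h, Or.inr ⟨c, _, h₁, midConn_of_altChain l hl, hs.symm h₂⟩]
  · rintro (h | ⟨c, d, h₁, hcd, h₂⟩)
    · exact Or.inl h
    obtain ⟨l, hl, rfl, hlen⟩ := exists_altChain_of_midConn hr hs hcd false 0
    exact Or.inr ⟨c, l, hlen, h₁, hl, hs.symm h₂⟩

end Chains

namespace IP

variable {Y : Type*}

theorem ext {p q : IP Y} (h : p.1.r = q.1.r) : p = q :=
  Subtype.ext (Setoid.ext fun _ _ => by rw [h])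

instance : Monoid (IP Y) where
  mul p q := ⟨⟨compRel p.1.r q.1.r, compRel_equivalence p.1.iseqv q.1.iseqv⟩,
    compRel_isLine p.1.iseqv q.1.iseqv p.2 q.2⟩
  one := ⟨Setoid.ker unprime, fun u => ⟨⟨unprime u, by simp⟩, ⟨unprime u, by simp⟩⟩⟩
  mul_assoc p q t := ext (compRel_assoc p.1.iseqv q.1.iseqv t.1.iseqv)
  one_mul p := ext (compRel_unprime_left p.1.iseqv)
  mul_one p := ext (compRel_unprime_right p.1.iseqv)

variable (X : Type*)

def noneLinked : Submonoid (IP (Option X)) where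
  carrier := {q | q.1.r (inl none) (inr none)}
  mul_mem' {_ q} hp hq := Or.inr ⟨none, none, hp, .refl, q.1.iseqv.symm hq⟩
  one_mem' := rfl

end IP

section Phi

variable {X : Type*} {r : X ⊕ X → X ⊕ X → Prop}

theorem unprime_map_some (z : X ⊕ X) : unprime (Sum.map some some z) = some (unprime z) := by
  cases z <;> rfl

theorem eq_map_some_or_unprime_eq_none (u : Option X ⊕ Option X) :
    (∃ z, u = Sum.map some some z) ∨ unprime u = none := by
  rcases u with (_ | x) | (_ | x)
  exacts [Or.inr rfl, Or.inl ⟨inl x, rfl⟩, Or.inr rfl, Or.inl ⟨inr x, rfl⟩]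

theorem inExtraBlock_map_some (z : X ⊕ X) :
    InExtraBlock r (Sum.map some some z) ↔ IsPointOf r z := by
  cases z <;> rfl

theorem inExtraBlock_of_unprime_eq_none {u : Option X ⊕ Option X} (hu : unprime u = none) :
    InExtraBlock r u := by
  rcases u with (_ | x) | (_ | x) <;> trivial

theorem not_isPointOf_of_isLine {z : X ⊕ X} (h : IsLine {w | r z w}) : ¬ IsPointOf r z := by
  obtain ⟨⟨x, hx⟩, ⟨y, hy⟩⟩ := h
  exact fun hz => Sum.inl_ne_inr ((hz _ hx).trans (hz _ hy).symm)

theorem IsPointOf.of_rel {z w : X ⊕ X} (hz : IsPointOf r z) (h : r z w) :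
    IsPointOf r w := by
  obtain rfl := hz w h
  exact hz

theorem map_some_injective :
    Function.Injective (Sum.map (some : X → Option X) (some : X → Option X)) :=
  Sum.map_injective.2 ⟨Option.some_injective _, Option.some_injective _⟩

theorem phiRel_map_some_iff (z w : X ⊕ X) :
    phiRel r (Sum.map some some z) (Sum.map some some w) ↔
      (r z w ∧ ¬ IsPointOf r z) ∨ (IsPointOf r z ∧ IsPointOf r w) := by
  simp only [phiRel, map_some_injective.eq_iff, inExtraBlock_map_some, exists_and_left,
    exists_eq_left']

theorem phiRel_equivalence (hr : Equivalence r) : Equivalence (phiRel r) := by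
  refine ⟨fun u => ?_, ?_, ?_⟩
  · rcases eq_map_some_or_unprime_eq_none u with ⟨z, rfl⟩ | hu
    · by_cases hz : IsPointOf r z
      exacts [Or.inr ⟨(inExtraBlock_map_some z).2 hz, (inExtraBlock_map_some z).2 hz⟩,
        Or.inl ⟨z, z, rfl, rfl, hr.refl z, hz⟩]
    · exact Or.inr ⟨inExtraBlock_of_unprime_eq_none hu, inExtraBlock_of_unprime_eq_none hu⟩
  · rintro u v (⟨z, w, rfl, rfl, h, hz⟩ | ⟨hu, hv⟩)
    exacts [Or.inl ⟨w, z, rfl, rfl, hr.symm h, fun hw => hz (hw.of_rel (hr.symm h))⟩,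
      Or.inr ⟨hv, hu⟩]
  · rintro u v t (⟨z, w, rfl, rfl, h, hz⟩ | ⟨hu, hv⟩)
      (⟨w', y, hww', rfl, h', hw'⟩ | ⟨hv', ht⟩)
    · obtain rfl := map_some_injective hww'
      exact Or.inl ⟨z, y, rfl, rfl, hr.trans h h', hz⟩
    · exact absurd (((inExtraBlock_map_some w).1 hv').of_rel (hr.symm h)) hz
    · exact absurd ((inExtraBlock_map_some w').1 (hww' ▸ hv)) hw'
    · exact Or.inr ⟨hu, ht⟩

theorem isPointOf_of_isPoint {z : X ⊕ X} (hz : r z z) (h : IsPoint {w | r z w}) :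
    IsPointOf r z := by
  obtain ⟨w₀, hw₀⟩ := h
  intro w hw
  have hw' : w ∈ {w | r z w} := hw
  have hz' : z ∈ {w | r z w} := hz
  rw [hw₀] at hw' hz'
  exact hw'.trans hz'.symm

theorem phiRel_isLine (a : PIP X) (u : Option X ⊕ Option X) : IsLine {v | phiRel a.1.r u v} := by
  have extra : InExtraBlock a.1.r u → IsLine {v | phiRel a.1.r u v} := fun hu =>
    ⟨⟨none, Or.inr ⟨hu, trivial⟩⟩, ⟨none, Or.inr ⟨hu, trivial⟩⟩⟩
  rcases eq_map_some_or_unprime_eq_none u with ⟨z, rfl⟩ | hu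
  · by_cases hz : IsPointOf a.1.r z
    · exact extra ((inExtraBlock_map_some z).2 hz)
    obtain ⟨⟨x, hx⟩, ⟨y, hy⟩⟩ :=
      (a.2 z).resolve_right fun h => hz (isPointOf_of_isPoint (a.1.iseqv.refl z) h)
    exact ⟨⟨some x, Or.inl ⟨z, inl x, rfl, rfl, hx, hz⟩⟩,
      ⟨some y, Or.inl ⟨z, inr y, rfl, rfl, hy, hz⟩⟩⟩
  · exact extra (inExtraBlock_of_unprime_eq_none hu)

theorem unprime_eq_none_of_phiRel (hr : ∀ z, ¬ IsPointOf r z) ⦃u v : Option X ⊕ Option X⦄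
    (h : phiRel r u v) (hu : unprime u = none) : unprime v = none := by
  rcases h with ⟨z, w, rfl, -, -, -⟩ | ⟨-, hv⟩
  · simp [unprime_map_some] at hu
  · rcases eq_map_some_or_unprime_eq_none v with ⟨w, rfl⟩ | hv'
    exacts [absurd ((inExtraBlock_map_some w).1 hv) (hr w), hv']

/-- Without points, `φ r` and `φ s` preserve the fibre over `none`, hence so does their product. -/
theorem not_compRel_phiRel_map_some_inl_none {s : X ⊕ X → X ⊕ X → Prop}
    (hr : Equivalence r) (hs : Equivalence s) (hr' : ∀ z, ¬ IsPointOf r z)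
    (hs' : ∀ z, ¬ IsPointOf s z) (z : X ⊕ X) :
    ¬ compRel (phiRel r) (phiRel s) (Sum.map some some z) (inl none) := fun h => by
  have hφr := phiRel_equivalence hr
  have hφs := phiRel_equivalence hs
  have := unprime_eq_of_compRel hφr hφs (unprime_eq_none_of_phiRel hr')
    (unprime_eq_none_of_phiRel hs') ((compRel_equivalence hφr hφs).symm h) rfl
  simp [unprime_map_some] at this

theorem phiRel_map_some_inl_none (z : X ⊕ X) :
    phiRel r (Sum.map some some z) (inl none) ↔ IsPointOf r z := by
  rw [← inExtraBlock_map_some]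
  constructor
  · rintro (⟨_, (w | w), -, h, -⟩ | ⟨h, -⟩) <;> first | cases h | exact h
  · exact fun h => Or.inr ⟨h, trivial⟩

/-- `φ⁻¹`: restrict to `X ∪ X'`, turning the elements of the block of `none` into points. -/
def phiInvRel (q : Option X ⊕ Option X → Option X ⊕ Option X → Prop) (z w : X ⊕ X) :
    Prop :=
  z = w ∨
    (q (Sum.map some some z) (Sum.map some some w) ∧ ¬ q (Sum.map some some z) (inl none))

theorem phiInvRel_phiRel (hr : Equivalence r) : phiInvRel (phiRel r) = r := by
  ext z w
  simp only [phiInvRel, phiRel_map_some_iff, phiRel_map_some_inl_none]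
  constructor
  · rintro (rfl | ⟨⟨h, -⟩ | ⟨hz, -⟩, hz'⟩)
    exacts [hr.refl z, h, absurd hz hz']
  · intro h
    by_cases hz : IsPointOf r z
    exacts [Or.inl (hz w h).symm, Or.inr ⟨Or.inl ⟨h, hz⟩, hz⟩]

theorem phiInvRel_equivalence {q : Option X ⊕ Option X → Option X ⊕ Option X → Prop}
    (hq : Equivalence q) : Equivalence (phiInvRel q) := by
  refine ⟨fun _ => Or.inl rfl, ?_, ?_⟩
  · rintro z w (rfl | ⟨h, hz⟩)
    exacts [Or.inl rfl, Or.inr ⟨hq.symm h, fun hw => hz (hq.trans h hw)⟩]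
  · rintro z w y (rfl | ⟨h, hz⟩) h'
    · exact h'
    · rcases h' with rfl | ⟨h', -⟩
      exacts [Or.inr ⟨h, hz⟩, Or.inr ⟨hq.trans h h', hz⟩]

end Phi

namespace IP

variable {X : Type*} (q : IP (Option X)) (hq : q ∈ noneLinked X)
include hq

theorem rel_inl_none_of_unprime_eq_none {u : Option X ⊕ Option X} (hu : unprime u = none) :
    q.1.r u (inl none) := by
  rcases u with (_ | x) | (_ | x)
  exacts [q.1.iseqv.refl _, absurd hu (by simp), q.1.iseqv.symm hq, absurd hu (by simp)]

theorem isLine_phiInvRel {z : X ⊕ X} (hz : ¬ q.1.r (Sum.map some some z) (inl none)) :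
    IsLine {w | phiInvRel q.1.r z w} := by
  obtain ⟨⟨_ | x, hx⟩, ⟨_ | y, hy⟩⟩ := q.2 (Sum.map some some z)
  · exact absurd hx hz
  · exact absurd hx hz
  · exact absurd (q.1.iseqv.trans hy (q.1.iseqv.symm hq)) hz
  · exact ⟨⟨x, Or.inr ⟨hx, hz⟩⟩, ⟨y, Or.inr ⟨hy, hz⟩⟩⟩

theorem isPointOf_phiInvRel_iff (z : X ⊕ X) :
    IsPointOf (phiInvRel q.1.r) z ↔ q.1.r (Sum.map some some z) (inl none) :=
  ⟨fun h => by_contra fun hz => not_isPointOf_of_isLine (isLine_phiInvRel q hq hz) h,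
    fun h _ hw => hw.elim Eq.symm fun hw => absurd h hw.2⟩

theorem phiInvRel_isLine_or_isPoint (z : X ⊕ X) :
    IsLine {w | phiInvRel q.1.r z w} ∨ IsPoint {w | phiInvRel q.1.r z w} := by
  by_cases hz : q.1.r (Sum.map some some z) (inl none)
  · exact Or.inr ⟨z, Set.ext fun w =>
      ⟨(isPointOf_phiInvRel_iff q hq z).2 hz w,
        fun hw => Or.inl (Set.mem_singleton_iff.1 hw).symm⟩⟩
  · exact Or.inl (isLine_phiInvRel q hq hz)

theorem inExtraBlock_phiInvRel_iff (u : Option X ⊕ Option X) :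
    InExtraBlock (phiInvRel q.1.r) u ↔ q.1.r u (inl none) := by
  rcases eq_map_some_or_unprime_eq_none u with ⟨z, rfl⟩ | hu
  · rw [inExtraBlock_map_some, isPointOf_phiInvRel_iff q hq]
  · exact iff_of_true (inExtraBlock_of_unprime_eq_none hu)
      (rel_inl_none_of_unprime_eq_none q hq hu)

theorem phiRel_phiInvRel : phiRel (phiInvRel q.1.r) = q.1.r := by
  have hq' := q.1.iseqv
  have exists_map (u : Option X ⊕ Option X) (hu : ¬ q.1.r u (inl none)) :
      ∃ z, u = Sum.map some some z :=
    (eq_map_some_or_unprime_eq_none u).resolve_right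
      fun h => hu (rel_inl_none_of_unprime_eq_none q hq h)
  ext u v
  constructor
  · rintro (⟨z, w, rfl, rfl, rfl | ⟨h, -⟩, -⟩ | ⟨hu, hv⟩)
    · exact hq'.refl _
    · exact h
    · rw [inExtraBlock_phiInvRel_iff q hq] at hu hv
      exact hq'.trans hu (hq'.symm hv)
  · intro h
    by_cases hu : q.1.r u (inl none)
    · exact Or.inr ⟨(inExtraBlock_phiInvRel_iff q hq u).2 hu,
        (inExtraBlock_phiInvRel_iff q hq v).2 (hq'.trans (hq'.symm h) hu)⟩
    obtain ⟨z, rfl⟩ := exists_map u hu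
    obtain ⟨w, rfl⟩ := exists_map v fun hv => hu (hq'.trans h hv)
    exact Or.inl ⟨z, w, rfl, rfl, Or.inr ⟨h, hu⟩,
      fun hz => hu ((isPointOf_phiInvRel_iff q hq z).1 hz)⟩

end IP

namespace PIP

variable {X : Type*}

theorem ext {a b : PIP X} (h : a.1.r = b.1.r) : a = b :=
  Subtype.ext (Setoid.ext fun _ _ => by rw [h])

variable (X) in
def phiEquiv : PIP X ≃ IP.noneLinked X where
  toFun a := ⟨⟨⟨phiRel a.1.r, phiRel_equivalence a.1.iseqv⟩, phiRel_isLine a⟩,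
    Or.inr ⟨trivial, trivial⟩⟩
  invFun q := ⟨⟨phiInvRel q.1.1.r, phiInvRel_equivalence q.1.1.iseqv⟩,
    IP.phiInvRel_isLine_or_isPoint q.1 q.2⟩
  left_inv a := ext (phiInvRel_phiRel a.1.iseqv)
  right_inv q := Subtype.ext (IP.ext (IP.phiRel_phiInvRel q.1 q.2))

instance : Monoid (PIP X) := (phiEquiv X).monoid

theorem phiRel_mul (a b : PIP X) :
    phiRel (a * b).1.r = compRel (phiRel a.1.r) (phiRel b.1.r) :=
  congrArg (fun q : IP.noneLinked X => q.1.1.r)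
    ((phiEquiv X).apply_symm_apply (phiEquiv X a * phiEquiv X b))

variable (X) in
def lineSubmonoid : Submonoid (PIP X) where
  carrier := {a | ∀ x, IsLine {y | a.1.r x y}}
  mul_mem' {a b} ha hb z := IP.isLine_phiInvRel _ (phiEquiv X a * phiEquiv X b).2 <|
    not_compRel_phiRel_map_some_inl_none a.1.iseqv b.1.iseqv
      (fun z => not_isPointOf_of_isLine (ha z)) (fun z => not_isPointOf_of_isLine (hb z)) z
  one_mem' z := IP.isLine_phiInvRel _ (1 : IP.noneLinked X).2 (by simp [unprime_map_some])

end PIP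

/-- With the multiplication `a·b = φ⁻¹(φ(a)·φ(b))`, `PIP_X` is a monoid
containing `IP_X` (the elements all of whose classes are lines) as a
submonoid. -/
theorem pip_monoid_contains_ip (X : Type*) :
    ∃ _ : Monoid (PIP X),
      (∀ a b : PIP X,
        phiRel ((a * b).1.r) = prodRel (phiRel a.1.r) (phiRel b.1.r)) ∧
      (∃ T : Submonoid (PIP X),
        (T : Set (PIP X)) = {a : PIP X | ∀ x, IsLine {y | a.1.r x y}}) := by
  refine ⟨inferInstance, fun a b => ?_, PIP.lineSubmonoid X, rfl⟩
  rw [PIP.phiRel_mul,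
    prodRel_eq_compRel (phiRel_equivalence a.1.iseqv) (phiRel_equivalence b.1.iseqv)]
end

section
/- In S, for 2 ≤ i ≤ n−2, the element σ_{i−1,i+2} = σ_{i-1}σ_iσ_{i+1}σ_iσ_{i-1} stabilizes λ_i under conjugation: σ_{i−1,i+2} λ_i σ_{i−1,i+2} = λ_i; similarly it stabilizes ρ_i. -/
/-- A system of elements of a monoid `S` satisfying the defining relations
(1)–(17) of the presentation of the partial dual inverse symmetric monoid.
Indices are 0-based: `sg i`, `lm i`, `rh i` (for `i + 2 ≤ n`) correspond to the
paper's `σ_{i+1}`, `λ_{i+1}`, `ρ_{i+1}`, and `ee i` (for `i + 1 ≤ n`) to the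
paper's `e_{i+1}`. -/
structure PipSystem (n : ℕ) (S : Type*) [Monoid S] where
  sg : ℕ → S
  lm : ℕ → S
  rh : ℕ → S
  ee : ℕ → S
  rel1 : ∀ i, i + 2 ≤ n → sg i * sg i = 1
  rel2 : ∀ i j, i + 2 ≤ n → j + 2 ≤ n → i + 1 < j → sg i * sg j = sg j * sg i
  rel3 : ∀ i, i + 3 ≤ n → sg i * sg (i+1) * sg i = sg (i+1) * sg i * sg (i+1)
  rel4a : ∀ i j, i + 2 ≤ n → j + 2 ≤ n → i + 1 < j → lm i * lm j = lm j * lm i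
  rel4b : ∀ i j, i + 2 ≤ n → j + 2 ≤ n → i + 1 < j → rh i * rh j = rh j * rh i
  rel4c : ∀ i j, i + 2 ≤ n → j + 2 ≤ n → (i + 1 < j ∨ j + 1 < i) →
    rh i * lm j = lm j * rh i
  rel5a : ∀ i, i + 3 ≤ n → lm i * rh (i+1) = sg (i+1) * rh i * lm i * ee (i+2)
  rel5b : ∀ i, i + 3 ≤ n → lm i * rh (i+1) = sg i * rh (i+1) * sg i * lm i
  rel5c : ∀ i, i + 3 ≤ n → lm (i+1) * rh i = ee (i+2) * rh i * lm i * sg (i+1)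
  rel5d : ∀ i, i + 3 ≤ n → lm (i+1) * rh i = rh i * sg i * lm (i+1) * sg i
  rel6a : ∀ i, i + 3 ≤ n → rh i * lm (i+1) = rh i * ee (i+2)
  rel6b : ∀ i, i + 3 ≤ n → rh (i+1) * lm i = ee (i+2) * lm i
  rel7a : ∀ i, i + 2 ≤ n → lm i * rh i * lm i = lm i
  rel7b : ∀ i, i + 2 ≤ n → rh i * lm i * rh i = rh i
  rel8a : ∀ i, i + 3 ≤ n → sg i * lm (i+1) * sg i = sg (i+1) * lm i * sg (i+1)
  rel8b : ∀ i, i + 3 ≤ n → sg i * rh (i+1) * sg i = sg (i+1) * rh i * sg (i+1)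
  rel9a : ∀ i, i + 2 ≤ n → lm i * sg i = lm i
  rel9b : ∀ i, i + 2 ≤ n → sg i * rh i = rh i
  rel10a : ∀ i j, i + 2 ≤ n → j + 2 ≤ n → (i + 1 < j ∨ j + 1 < i) →
    sg i * lm j = lm j * sg i
  rel10b : ∀ i j, i + 2 ≤ n → j + 2 ≤ n → (i + 1 < j ∨ j + 1 < i) →
    sg i * rh j = rh j * sg i
  rel11a : ∀ i, i + 3 ≤ n → lm i * lm (i+1) = lm i * lm (i+1) * sg i
  rel11b : ∀ i, i + 3 ≤ n → lm i * lm (i+1) = sg (i+1) * (lm i * lm (i+1))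
  rel11c : ∀ i, i + 3 ≤ n → rh (i+1) * rh i = sg i * (rh (i+1) * rh i)
  rel11d : ∀ i, i + 3 ≤ n → rh (i+1) * rh i = rh (i+1) * rh i * sg (i+1)
  rel12a : ∀ i, i + 3 ≤ n → sg (i+1) * (lm (i+1) * lm i) = lm (i+1) * lm i
  rel12b : ∀ i, i + 3 ≤ n → lm (i+1) * lm i = lm i * ee (i+2)
  rel12c : ∀ i, i + 3 ≤ n → rh i * rh (i+1) * sg (i+1) = rh i * rh (i+1)
  rel12d : ∀ i, i + 3 ≤ n → rh i * rh (i+1) = ee (i+2) * rh i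
  rel13a : ∀ i, i + 2 ≤ n → ee (i+1) = lm i * rh i
  rel13b : ee 0 = sg 0 * ee 1 * sg 0
  rel14a : ∀ i, i + 1 ≤ n → ee i * ee i = ee i
  rel14b : ∀ i, i + 2 ≤ n → ee i * ee (i+1) = ee (i+1) * ee i
  rel14c : ∀ i, i + 2 ≤ n → ee i * ee (i+1) = lm i * lm i
  rel14d : ∀ i, i + 2 ≤ n → ee i * ee (i+1) = rh i * rh i
  rel14e : ∀ i, i + 2 ≤ n → ee i * ee (i+1) = rh i * sg i * lm i
  rel15a : ∀ i j, i + 1 ≤ n → j + 2 ≤ n → i ≠ j → i ≠ j + 1 →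
    ee i * sg j = sg j * ee i
  rel15b : ∀ i, i + 2 ≤ n → ee i * sg i = sg i * ee (i+1)
  rel15c : ∀ i, i + 2 ≤ n → sg i * ee i = ee (i+1) * sg i
  rel16a : ∀ i j, i + 1 ≤ n → j + 2 ≤ n → i ≠ j → i ≠ j + 1 →
    ee i * lm j = lm j * ee i
  rel16b : ∀ i, i + 2 ≤ n → ee (i+1) * lm i = lm i
  rel16c : ∀ i, i + 2 ≤ n → ee i * lm i = lm i * ee (i+1)
  rel16d : ∀ i, i + 2 ≤ n → ee i * lm i = lm i * ee i
  rel16e : ∀ i, i + 2 ≤ n → ee i * lm i = ee i * ee (i+1)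
  rel17a : ∀ i j, i + 1 ≤ n → j + 2 ≤ n → i ≠ j → i ≠ j + 1 →
    ee i * rh j = rh j * ee i
  rel17b : ∀ i, i + 2 ≤ n → rh i * ee (i+1) = rh i
  rel17c : ∀ i, i + 2 ≤ n → rh i * ee i = ee (i+1) * rh i
  rel17d : ∀ i, i + 2 ≤ n → rh i * ee i = ee i * rh i
  rel17e : ∀ i, i + 2 ≤ n → rh i * ee i = ee i * ee (i+1)

private lemma conj_key {S : Type*} [Monoid S] (a b c l m : S)
    (ha : a * a = 1) (hb : b * b = 1) (hc : c * c = 1)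
    (h8 : a * l * a = b * m * b) (h10 : c * m = m * c) :
    (a * b * c * b * a) * l * (a * b * c * b * a) = l := by
  have cb : ∀ x : S, b * (b * x) = x := fun x => by rw [← mul_assoc, hb, one_mul]
  have cc : ∀ x : S, c * (c * x) = x := fun x => by rw [← mul_assoc, hc, one_mul]
  have ca : ∀ x : S, a * (a * x) = x := fun x => by rw [← mul_assoc, ha, one_mul]
  have conj : ∀ x : S, a * (l * (a * x)) = b * (m * (b * x)) := fun x => by
    rw [← mul_assoc, ← mul_assoc, h8, mul_assoc, mul_assoc]
  have h10' : ∀ x : S, c * (m * x) = m * (c * x) := fun x => by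
    rw [← mul_assoc, h10, mul_assoc]
  calc (a * b * c * b * a) * l * (a * b * c * b * a)
      = a * (b * (c * (b * (a * (l * (a * (b * (c * (b * a))))))))) := by
        simp only [mul_assoc]
    _ = a * (b * (c * (b * (b * (m * (b * (b * (c * (b * a))))))))) := by rw [conj]
    _ = a * (b * (c * (m * (c * (b * a))))) := by rw [cb, cb]
    _ = a * (b * (m * (c * (c * (b * a))))) := by rw [h10']
    _ = a * (b * (m * (b * a))) := by rw [cc]
    _ = a * (a * (l * (a * a))) := by rw [← conj]
    _ = l := by rw [ca, ha, mul_one]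

/-- In `S`, for `2 ≤ i ≤ n−2` (paper indexing; here `i = j + 2` with 0-based
generator index `j + 1`), the element `σ_{i−1,i+2} = σ_{i-1}σ_iσ_{i+1}σ_iσ_{i-1}`
stabilizes `λ_i` and `ρ_i` under conjugation. -/
theorem sigma_stabilizes_lambda_rho
    {S : Type*} [Monoid S] {n : ℕ} (hn : 3 ≤ n) (P : PipSystem n S)
    (j : ℕ) (hj : j + 4 ≤ n) :
    (P.sg j * P.sg (j+1) * P.sg (j+2) * P.sg (j+1) * P.sg j) * P.lm (j+1) *
      (P.sg j * P.sg (j+1) * P.sg (j+2) * P.sg (j+1) * P.sg j) = P.lm (j+1) ∧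
    (P.sg j * P.sg (j+1) * P.sg (j+2) * P.sg (j+1) * P.sg j) * P.rh (j+1) *
      (P.sg j * P.sg (j+1) * P.sg (j+2) * P.sg (j+1) * P.sg j) = P.rh (j+1) := by
  have ha : P.sg j * P.sg j = 1 := P.rel1 j (by omega)
  have hb : P.sg (j+1) * P.sg (j+1) = 1 := P.rel1 (j+1) (by omega)
  have hc : P.sg (j+2) * P.sg (j+2) = 1 := P.rel1 (j+2) (by omega)
  constructor
  · exact conj_key _ _ _ _ _ ha hb hc (P.rel8a j (by omega))
      (P.rel10a (j+2) j (by omega) (by omega) (Or.inr (by omega)))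
  · exact conj_key _ _ _ _ _ ha hb hc (P.rel8b j (by omega))
      (P.rel10b (j+2) j (by omega) (by omega) (Or.inr (by omega)))
end

section
/- Every element of S can be written as a product α_1⋯α_kβ, where k ≥ 0, each α_i equals some λ_{p,q} or ρ_{p,q}, and β lies in the σ-generated copy of S_n. -/
open Submonoid

section ConjugatesUnder

variable {M G : Type*} [Monoid M] [Group G] (f : G →* M)

def conjugatesUnder (X : Set M) : Set M :=
  {y | ∃ g, ∃ x ∈ X, y = f g⁻¹ * x * f g}

theorem map_mul_conj (g h : G) (x : M) :
    f h * (f g⁻¹ * x * f g) = f (g * h⁻¹)⁻¹ * x * f (g * h⁻¹) * f h := by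
  simp only [mul_inv_rev, inv_inv, map_mul, mul_assoc, ← map_mul f h⁻¹ h, inv_mul_cancel,
    map_one, mul_one]

variable {f} {X : Set M}

theorem exists_map_mul_eq_mul_map_of_mem_closure (h : G) {a : M}
    (ha : a ∈ closure (conjugatesUnder f X)) :
    ∃ b ∈ closure (conjugatesUnder f X), f h * a = b * f h := by
  induction ha using closure_induction with
  | mem a ha =>
    obtain ⟨g, x, hx, rfl⟩ := ha
    exact ⟨_, subset_closure ⟨g * h⁻¹, x, hx, rfl⟩, map_mul_conj f g h x⟩
  | one => exact ⟨1, one_mem _, by rw [mul_one, one_mul]⟩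
  | mul a a' _ _ iha iha' =>
    obtain ⟨b, hb, hab⟩ := iha
    obtain ⟨b', hb', hab'⟩ := iha'
    exact ⟨b * b', mul_mem hb hb', by rw [← mul_assoc, hab, mul_assoc, hab', mul_assoc]⟩

theorem exists_eq_mul_map_of_mem_closure_union_range {x : M}
    (hx : x ∈ closure (X ∪ Set.range f)) :
    ∃ a ∈ closure (conjugatesUnder f X), ∃ g, x = a * f g := by
  induction hx using closure_induction with
  | mem x hx =>
    rcases hx with hx | ⟨g, rfl⟩
    · exact ⟨x, subset_closure ⟨1, x, hx, by simp⟩, 1, by simp⟩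
    · exact ⟨1, one_mem _, g, (one_mul _).symm⟩
  | one => exact ⟨1, one_mem _, 1, by simp⟩
  | mul x y _ _ ihx ihy =>
    obtain ⟨a, ha, g, rfl⟩ := ihx
    obtain ⟨b, hb, h, rfl⟩ := ihy
    obtain ⟨b', hb', hgb⟩ := exists_map_mul_eq_mul_map_of_mem_closure g hb
    refine ⟨a * b', mul_mem ha hb', g * h, ?_⟩
    rw [map_mul, mul_assoc, ← mul_assoc (f g), hgb]
    simp only [mul_assoc]

end ConjugatesUnder

namespace PipSystem

variable {S : Type*} [Monoid S] {n : ℕ} (P : PipSystem n S)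

def generators : Set S :=
  {x : S | ∃ i, i + 2 ≤ n ∧ (x = P.sg i ∨ x = P.lm i ∨ x = P.rh i)} ∪
    {x : S | ∃ i, i + 1 ≤ n ∧ x = P.ee i}

theorem eq_sg_mul_mul_sg {i : ℕ} (hi : i + 2 ≤ n) {x y : S} (h : P.sg i * x * P.sg i = y) :
    x = P.sg i * y * P.sg i := by
  rw [← h, ← mul_assoc, ← mul_assoc, P.rel1 i hi, one_mul, mul_assoc, P.rel1 i hi, mul_one]

variable {P} {T : Submonoid S}

theorem mem_of_sg_conj_succ (hsg : ∀ i, i + 2 ≤ n → P.sg i ∈ T) {x : ℕ → S}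
    (h0 : x 0 ∈ T)
    (hsucc : ∀ i, i + 3 ≤ n →
      x (i + 1) = P.sg i * (P.sg (i + 1) * x i * P.sg (i + 1)) * P.sg i) :
    ∀ i, i + 2 ≤ n → x i ∈ T
  | 0, _ => h0
  | i + 1, hi => by
    rw [hsucc i hi]
    have hs := hsg i (by omega)
    have hs' := hsg (i + 1) hi
    exact mul_mem (mul_mem hs (mul_mem (mul_mem hs' (mem_of_sg_conj_succ hsg h0 hsucc i
      (by omega))) hs')) hs

theorem closure_generators_le (hn : 2 ≤ n) (hsg : ∀ i, i + 2 ≤ n → P.sg i ∈ T)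
    (hlm : P.lm 0 ∈ T) (hrh : P.rh 0 ∈ T) : closure P.generators ≤ T := by
  have hlm' := mem_of_sg_conj_succ hsg hlm fun i hi =>
    P.eq_sg_mul_mul_sg (by omega) (P.rel8a i hi)
  have hrh' := mem_of_sg_conj_succ hsg hrh fun i hi =>
    P.eq_sg_mul_mul_sg (by omega) (P.rel8b i hi)
  have hee : ∀ i, i + 1 ≤ n → P.ee i ∈ T
    | 0, _ => by
      rw [P.rel13b, P.rel13a 0 hn]
      exact mul_mem (mul_mem (hsg 0 hn) (mul_mem hlm hrh)) (hsg 0 hn)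
    | i + 1, hi => by
      rw [P.rel13a i hi]
      exact mul_mem (hlm' i hi) (hrh' i hi)
  rw [closure_le]
  rintro x (⟨i, hi, rfl | rfl | rfl⟩ | ⟨i, hi, rfl⟩)
  exacts [hsg i hi, hlm' i hi, hrh' i hi, hee i hi]

end PipSystem

/-- Every element of `S` can be written as `α_1 ⋯ α_k β` where each `α_i` is
some `λ_{p,q}` or `ρ_{p,q}` and `β` lies in the σ-generated copy of `S_n`
(here: is the image of a permutation under `f`). The hypothesis `hgen` says
that `S` is generated by the `σ_i`, `λ_i`, `ρ_i`, `e_i`. -/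
theorem factorization_lambda_rho_perm
    {S : Type*} [Monoid S] {n : ℕ} (hn : 3 ≤ n) (P : PipSystem n S)
    (f : Equiv.Perm (Fin n) →* S)
    (hf : ∀ (i : ℕ) (h : i + 1 < n),
      f (Equiv.swap ⟨i, Nat.lt_of_succ_lt h⟩ ⟨i + 1, h⟩) = P.sg i)
    (lam rho : Fin n → Fin n → S)
    (hlam : ∀ (p q : Fin n) (π : Equiv.Perm (Fin n)),
      π ⟨0, by omega⟩ = p → π ⟨1, by omega⟩ = q →
      lam p q = f π⁻¹ * P.lm 0 * f π)
    (hrho : ∀ (p q : Fin n) (π : Equiv.Perm (Fin n)),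
      π ⟨0, by omega⟩ = p → π ⟨1, by omega⟩ = q →
      rho p q = f π⁻¹ * P.rh 0 * f π)
    (hgen : Submonoid.closure
      ({x : S | ∃ i, i + 2 ≤ n ∧ (x = P.sg i ∨ x = P.lm i ∨ x = P.rh i)} ∪
       {x : S | ∃ i, i + 1 ≤ n ∧ x = P.ee i}) = ⊤) :
    ∀ s : S, ∃ (L : List S) (π : Equiv.Perm (Fin n)),
      (∀ x ∈ L, ∃ p q : Fin n, p ≠ q ∧ (x = lam p q ∨ x = rho p q)) ∧
      s = L.prod * f π := by
  intro s
  have hs : s ∈ closure ({P.lm 0, P.rh 0} ∪ Set.range f) := by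
    refine P.closure_generators_le (by omega) (fun i hi => ?_) ?_ ?_ (hgen ▸ mem_top s)
    · exact subset_closure (Or.inr ⟨_, hf i hi⟩)
    · exact subset_closure (Or.inl (Or.inl rfl))
    · exact subset_closure (Or.inl (Or.inr rfl))
  obtain ⟨a, ha, π, rfl⟩ := exists_eq_mul_map_of_mem_closure_union_range hs
  obtain ⟨L, hL, rfl⟩ := exists_list_of_mem_closure ha
  refine ⟨L, π, fun x hx => ?_, rfl⟩
  obtain ⟨θ, y, hy, rfl⟩ := hL x hx
  have hθ : θ ⟨0, by omega⟩ ≠ θ ⟨1, by omega⟩ :=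
    θ.injective.ne (by simp [Fin.ext_iff])
  rcases hy with rfl | rfl
  exacts [⟨_, _, hθ, Or.inl (hlam _ _ θ rfl rfl).symm⟩,
    ⟨_, _, hθ, Or.inr (hrho _ _ θ rfl rfl).symm⟩]
end
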